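/- arXiv:2604.19898 — 6 statements merged into one kernel-verified Lean document; each statement's English description precedes it below -/
import Mathlib

section
/- Let \Phi_1(q) be the unique formal power series with \Phi_1(0) = 1 satisfying q \Phi_1(q)^2 + (1 - q - q^2)\Phi_1(q) - 1 = 0, and let A(q) be the unique formal power series with A(0) = 1 satisfying q^2 A(q)^2 - (q^2 - q + 1) A(q) + 1 = 0. Then \Phi_1(q) = 1 + q - q\,A(-q). -/
open PowerSeries

/-!
Substituting `q ↦ -q` turns the equation of `A` into `q²B² - (q² + q + 1)B + 1 = 0` for
`B = A(-q)`. For `G = 1 + q - qB` one has the identity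
`qG² + (1 - q - q²)G - 1 = q · (q²B² - (q² + q + 1)B + 1)`, so `G` solves the equation of `Φ₁`,
and `G(0) = 1` since `qB` has no constant term; uniqueness of `Φ₁` gives `G = Φ₁`.
-/

theorem golden_quadratic_one_add_sub_mul {R : Type*} [CommRing R] (x b : R) :
    x * (1 + x - x * b) ^ 2 + (1 - x - x ^ 2) * (1 + x - x * b) - 1 =
      x * (x ^ 2 * b ^ 2 - (x ^ 2 + x + 1) * b + 1) := by
  ring

theorem rescale_neg_one_quadratic {R : Type*} [CommRing R] {A : R⟦X⟧}
    (hA : X ^ 2 * A ^ 2 - (X ^ 2 - X + 1) * A + 1 = 0) :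
    X ^ 2 * rescale (-1) A ^ 2 - (X ^ 2 + X + 1) * rescale (-1) A + 1 = 0 := by
  simpa [rescale_neg_one_X] using congrArg (rescale (-1 : R)) hA

theorem stmt_1_general (Φ A : ℚ⟦X⟧)
    (hΦuniq : ∀ G : ℚ⟦X⟧, constantCoeff G = 1 →
      X * G ^ 2 + (1 - X - X ^ 2) * G - 1 = 0 → G = Φ)
    (hA : X ^ 2 * A ^ 2 - (X ^ 2 - X + 1) * A + 1 = 0) :
    Φ = 1 + X - X * PowerSeries.rescale (-1) A := by
  refine (hΦuniq _ ?_ ?_).symm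
  · simp
  · rw [golden_quadratic_one_add_sub_mul, rescale_neg_one_quadratic hA, mul_zero]

theorem stmt_1 (Φ A : ℚ⟦X⟧)
    (hΦ0 : constantCoeff Φ = 1)
    (hΦ : X * Φ ^ 2 + (1 - X - X ^ 2) * Φ - 1 = 0)
    (hΦuniq : ∀ G : ℚ⟦X⟧, constantCoeff G = 1 →
      X * G ^ 2 + (1 - X - X ^ 2) * G - 1 = 0 → G = Φ)
    (hA0 : constantCoeff A = 1)
    (hA : X ^ 2 * A ^ 2 - (X ^ 2 - X + 1) * A + 1 = 0)
    (hAuniq : ∀ G : ℚ⟦X⟧, constantCoeff G = 1 →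
      X ^ 2 * G ^ 2 - (X ^ 2 - X + 1) * G + 1 = 0 → G = A) :
    Φ = 1 + X - X * PowerSeries.rescale (-1) A :=
  stmt_1_general Φ A hΦuniq hA
end

section
/- Define R_n(q) = q[n]_q + (q^n+1)(q-1) where [n]_q = 1+q+\cdots+q^{n-1}, and P_n(q) = R_n(q)^2 + 4q. Then for every integer n \geq 1, P_n(q) = (1 - q + q^2) Q_n(q), where Q_n(q) = [n+1]_q^2 - q[2n-1]_q + 2q^n. -/
open Polynomial

open Finset in
theorem geom_sum_sq_add_four_mul_factor {A : Type*} [CommRing A] [IsDomain A] {q : A}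
    (hq : q ≠ 1) {n : ℕ} (hn : 1 ≤ n) :
    (q * ∑ i ∈ range n, q ^ i + (q ^ n + 1) * (q - 1)) ^ 2 + 4 * q =
      (1 - q + q ^ 2) * ((∑ i ∈ range (n + 1), q ^ i) ^ 2 - q * ∑ i ∈ range (2 * n - 1), q ^ i
        + 2 * q ^ n) := by
  obtain ⟨k, rfl⟩ := Nat.exists_eq_add_of_le' hn
  have hodd : 2 * (k + 1) - 1 = 2 * k + 1 := by omega
  rw [hodd]
  apply mul_left_cancel₀ (pow_ne_zero 2 (sub_ne_zero.mpr hq))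
  -- clearing the denominators `q - 1` turns every `[m]_q` into `q ^ m - 1`
  calc (q - 1) ^ 2 * ((q * ∑ i ∈ range (k + 1), q ^ i + (q ^ (k + 1) + 1) * (q - 1)) ^ 2 + 4 * q)
      = (q * ((∑ i ∈ range (k + 1), q ^ i) * (q - 1)) + (q ^ (k + 1) + 1) * (q - 1) ^ 2) ^ 2
          + 4 * q * (q - 1) ^ 2 := by ring
    _ = (q * (q ^ (k + 1) - 1) + (q ^ (k + 1) + 1) * (q - 1) ^ 2) ^ 2 + 4 * q * (q - 1) ^ 2 := by
          rw [geom_sum_mul]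
    _ = (1 - q + q ^ 2) * ((q ^ (k + 2) - 1) ^ 2 - q * (q - 1) * (q ^ (2 * k + 1) - 1)
          + 2 * q ^ (k + 1) * (q - 1) ^ 2) := by ring
    _ = (1 - q + q ^ 2) * (((∑ i ∈ range (k + 2), q ^ i) * (q - 1)) ^ 2
          - q * (q - 1) * ((∑ i ∈ range (2 * k + 1), q ^ i) * (q - 1))
          + 2 * q ^ (k + 1) * (q - 1) ^ 2) := by rw [geom_sum_mul, geom_sum_mul]
    _ = _ := by ring

theorem stmt_5 (n : ℕ) (hn : 1 ≤ n)
    (qint : ℕ → Polynomial ℤ) (hqint : ∀ m, qint m = ∑ i ∈ Finset.range m, X ^ i)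
    (R P Q : Polynomial ℤ)
    (hR : R = X * qint n + (X ^ n + 1) * (X - 1))
    (hP : P = R ^ 2 + 4 * X)
    (hQ : Q = (qint (n + 1)) ^ 2 - X * qint (2 * n - 1) + 2 * X ^ n) :
    P = (1 - X + X ^ 2) * Q := by
  subst hP hR hQ
  simp only [hqint]
  exact geom_sum_sq_add_four_mul_factor (by simpa using X_ne_C (1 : ℤ)) hn
end

section
/- Let \kappa_l denote the coefficients of \Phi_1, the unique power series with \Phi_1(0)=1 satisfying q\Phi_1^2+(1-q-q^2)\Phi_1-1=0. Then for all l \geq 4, (l+1)\kappa_l + (2l-1)\kappa_{l-1} - (l-2)\kappa_{l-2} + (2l-7)\kappa_{l-3} + (l-5)\kappa_{l-4} = 0. -/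
/-!
Differentiating the quadratic equation and eliminating `Φ ^ 2` between it and its derivative
gives a linear differential equation with polynomial coefficients for the Euler derivative
`q Φ'`, whose coefficients are `l κ_l`:
`(1 + 2q - q² + 2q³ + q⁴) q Φ' + (1 + q - q³ - q⁴) Φ = 1 + q + 3q²`.
Its coefficient of `q ^ l`, for `l ≥ 4`, is the recurrence.
-/

open PowerSeries

section

variable {R : Type*} [CommRing R]

theorem coeff_X_mul_derivative (Φ : R⟦X⟧) (n : ℕ) :
    coeff n (X * derivative R Φ) = n * coeff n Φ := by
  cases n with
  | zero => simp
  | succ n => rw [coeff_succ_X_mul, coeff_derivative, mul_comm, Nat.cast_add_one]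

theorem euler_equation_of_quadratic {Φ : R⟦X⟧}
    (hΦ : X * Φ ^ 2 + (1 - X - X ^ 2) * Φ - 1 = 0) :
    (1 + 2 * X - X ^ 2 + 2 * X ^ 3 + X ^ 4) * (X * derivative R Φ)
      + (1 + X - X ^ 3 - X ^ 4) * Φ = 1 + X + 3 * X ^ 2 := by
  have hderiv : Φ ^ 2 + 2 * X * Φ * derivative R Φ + (-1 - 2 * X) * Φ
      + (1 - X - X ^ 2) * derivative R Φ = 0 := by
    have h := congrArg (derivative R) hΦ
    simp only [map_add, map_sub, Derivation.leibniz, Derivation.leibniz_pow, derivative_X,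
      Derivation.map_one_eq_zero, map_zero, nsmul_eq_mul, smul_eq_mul, mul_one] at h
    linear_combination h
  linear_combination (-(4 * X ^ 2 * derivative R Φ + 2 * X * Φ - 1 - X - 3 * X ^ 2)) * hΦ
    + (X * (2 * X * Φ + 1 - X - X ^ 2)) * hderiv

theorem coeff_recurrence_of_quadratic {Φ : R⟦X⟧}
    (hΦ : X * Φ ^ 2 + (1 - X - X ^ 2) * Φ - 1 = 0) (n : ℕ) :
    ((n : R) + 5) * coeff (n + 4) Φ + (2 * n + 7) * coeff (n + 3) Φ
      - (n + 2) * coeff (n + 2) Φ + (2 * n + 1) * coeff (n + 1) Φ + (n - 1) * coeff n Φ = 0 := by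
  have h := congrArg (coeff (n + 4)) (euler_equation_of_quadratic hΦ)
  have hE := coeff_X_mul_derivative Φ
  set E := X * derivative R Φ
  have hsplit : (1 + 2 * X - X ^ 2 + 2 * X ^ 3 + X ^ 4) * E + (1 + X - X ^ 3 - X ^ 4) * Φ
      = (E + Φ) + X ^ 1 * (E + E + Φ) - X ^ 2 * E + X ^ 3 * (E + E - Φ) + X ^ 4 * (E - Φ) := by
    ring
  have hrhs : coeff (n + 4) (1 + X + 3 * X ^ 2 : R⟦X⟧) = 0 := by
    rw [← map_ofNat C 3]
    simp [coeff_X, coeff_X_pow, coeff_one]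
  simp only [hsplit, hrhs, map_add, map_sub, coeff_X_pow_mul', hE, Nat.cast_add, Nat.cast_ofNat,
    Nat.cast_one, le_add_iff_nonneg_left, zero_le, ↓reduceIte, Nat.add_one_sub_one,
    Nat.reduceSubDiff, add_tsub_cancel_right] at h
  linear_combination h

end

theorem stmt_7_general (Φ : ℚ⟦X⟧)
    (hΦ : X * Φ ^ 2 + (1 - X - X ^ 2) * Φ - 1 = 0) :
    ∀ l : ℕ, 4 ≤ l →
      ((l : ℚ) + 1) * coeff l Φ + (2 * (l : ℚ) - 1) * coeff (l - 1) Φ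
        - ((l : ℚ) - 2) * coeff (l - 2) Φ + (2 * (l : ℚ) - 7) * coeff (l - 3) Φ
        + ((l : ℚ) - 5) * coeff (l - 4) Φ = 0 := by
  intro l hl
  obtain ⟨n, rfl⟩ := Nat.exists_eq_add_of_le' hl
  simp only [Nat.cast_add, Nat.cast_ofNat, Nat.add_one_sub_one, Nat.reduceSubDiff,
    add_tsub_cancel_right]
  linear_combination coeff_recurrence_of_quadratic hΦ n

theorem stmt_7 (Φ : ℚ⟦X⟧)
    (hΦ0 : constantCoeff Φ = 1)
    (hΦ : X * Φ ^ 2 + (1 - X - X ^ 2) * Φ - 1 = 0) :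
    ∀ l : ℕ, 4 ≤ l →
      ((l : ℚ) + 1) * coeff l Φ + (2 * (l : ℚ) - 1) * coeff (l - 1) Φ
        - ((l : ℚ) - 2) * coeff (l - 2) Φ + (2 * (l : ℚ) - 7) * coeff (l - 3) Φ
        + ((l : ℚ) - 5) * coeff (l - 4) Φ = 0 :=
  stmt_7_general Φ hΦ
end

section
/- Let n \geq 1, R_n(q) = q[n]_q + (q^n+1)(q-1), and let \Phi_n be the unique formal power series with \Phi_n(0)=1 satisfying q\Phi_n^2 = R_n\Phi_n + 1. Then \Phi_n satisfies the linear differential equation q(R_n^2 + 4q)\Phi_n' + (R_n^2 - q R_n R_n' + 2q)\Phi_n + R_n - 2qR_n' = 0, where ' denotes formal differentiation with respect to q. -/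
/-!
Differentiating `q Φ² = R Φ + 1` gives
`Φ² + 2qΦΦ' = R'Φ + RΦ'`, i.e. `(2qΦ - R) Φ' = R'Φ - Φ²`; multiplying by `2qΦ - R`, whose square is
the discriminant `R² + 4q` by the quadratic relation, and eliminating `Φ²` once more yields the
linear equation.
-/

open PowerSeries

theorem Derivation.linear_ode_of_quadratic {S A : Type*} [CommRing S] [CommRing A] [Algebra S A]
    (D : Derivation S A A) {x r f : A} (hx : D x = 1) (h : x * f ^ 2 = r * f + 1) :
    x * (r ^ 2 + 4 * x) * D f + (r ^ 2 - x * r * D r + 2 * x) * f + r - 2 * x * D r = 0 := by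
  have hD : f ^ 2 + 2 * x * f * D f = D r * f + r * D f := by
    have := congrArg D h
    simp only [pow_two, Derivation.leibniz, Derivation.map_one_eq_zero, smul_eq_mul, hx,
      map_add] at this
    linear_combination this
  linear_combination (2 * x * D r - r - 2 * x * f - 4 * x ^ 2 * D f) * h
    + (2 * x ^ 2 * f - x * r) * hD

theorem stmt_9_general (R Φ : ℚ⟦X⟧)
    (hΦ : X * Φ ^ 2 = R * Φ + 1) :
    X * (R ^ 2 + 4 * X) * (d⁄dX ℚ Φ)
      + (R ^ 2 - X * R * (d⁄dX ℚ R) + 2 * X) * Φ + R - 2 * X * (d⁄dX ℚ R) = 0 :=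
  (d⁄dX ℚ).linear_ode_of_quadratic derivative_X hΦ

theorem stmt_9 (n : ℕ) (hn : 1 ≤ n) (R Φ : ℚ⟦X⟧)
    (hR : R = X * (∑ i ∈ Finset.range n, X ^ i) + (X ^ n + 1) * (X - 1))
    (hΦ0 : constantCoeff Φ = 1)
    (hΦ : X * Φ ^ 2 = R * Φ + 1) :
    X * (R ^ 2 + 4 * X) * (d⁄dX ℚ Φ)
      + (R ^ 2 - X * R * (d⁄dX ℚ R) + 2 * X) * Φ + R - 2 * X * (d⁄dX ℚ R) = 0 :=
  stmt_9_general R Φ hΦ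
end

section
/- Let \Phi_1 be the unique formal power series with \Phi_1(0)=1 satisfying q\Phi_1^2 + (1-q-q^2)\Phi_1 - 1 = 0. Then q(1-q+q^2)(1+3q+q^2)\Phi_1'(q) + (1+q)(1-q^3)\Phi_1(q) = 1 + q + 3q^2. -/
/-!
Writing the relation as `a Φ² + b Φ + c = 0` with `a = q`, `b = 1 - q - q²`, `c = -1`, the
discriminant is `b² + 4q = (1 - q + q²)(1 + 3q + q²)`, and it equals `u²` for `u = 2qΦ + b`.
Differentiating the relation gives `u Φ' = (1 + 2q)Φ - Φ²`, so the left-hand side becomes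
`q u ((1 + 2q)Φ - Φ²) + (1 + q)(1 - q³)Φ`, a cubic in `Φ` that reduces to `1 + q + 3q²`
modulo the quadratic relation.
-/

open PowerSeries

theorem Derivation.mul_map_of_quadratic_eq_zero {R A : Type*} [CommSemiring R] [CommRing A]
    [Algebra R A] (D : Derivation R A A) {a b c f : A} (h : a * f ^ 2 + b * f + c = 0) :
    (2 * a * f + b) * D f = -(f ^ 2 * D a + f * D b + D c) := by
  have h' := congrArg D h
  simp only [map_add, Derivation.leibniz, Derivation.leibniz_pow, map_zero, smul_eq_mul] at h'
  linear_combination h'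

theorem sq_two_mul_add_of_quadratic_eq_zero {A : Type*} [CommRing A] {a b c f : A}
    (h : a * f ^ 2 + b * f + c = 0) : (2 * a * f + b) ^ 2 = b ^ 2 - 4 * a * c := by
  linear_combination 4 * a * h

theorem stmt_10_general (Φ : ℚ⟦X⟧)
    (hΦ : X * Φ ^ 2 + (1 - X - X ^ 2) * Φ - 1 = 0) :
    X * (1 - X + X ^ 2) * (1 + 3 * X + X ^ 2) * (d⁄dX ℚ Φ)
      + (1 + X) * (1 - X ^ 3) * Φ = 1 + X + 3 * X ^ 2 := by
  have hquad : X * Φ ^ 2 + (1 - X - X ^ 2) * Φ + (-1) = 0 := by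
    rw [← sub_eq_add_neg, hΦ]
  set u : ℚ⟦X⟧ := 2 * X * Φ + (1 - X - X ^ 2)
  have hdisc : u ^ 2 = (1 - X + X ^ 2) * (1 + 3 * X + X ^ 2) := by
    rw [sq_two_mul_add_of_quadratic_eq_zero hquad]
    ring
  have hderiv : u * d⁄dX ℚ Φ = (1 + 2 * X) * Φ - Φ ^ 2 := by
    rw [(d⁄dX ℚ).mul_map_of_quadratic_eq_zero hquad]
    simp only [map_sub, map_neg, Derivation.leibniz_pow, derivative_X,
      Derivation.map_one_eq_zero, smul_eq_mul, nsmul_eq_mul]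
    ring
  linear_combination (-X * d⁄dX ℚ Φ) * hdisc + X * u * hderiv
    + (1 + X + 3 * X ^ 2 - 2 * X * Φ) * hΦ

theorem stmt_10 (Φ : ℚ⟦X⟧)
    (hΦ0 : constantCoeff Φ = 1)
    (hΦ : X * Φ ^ 2 + (1 - X - X ^ 2) * Φ - 1 = 0) :
    X * (1 - X + X ^ 2) * (1 + 3 * X + X ^ 2) * (d⁄dX ℚ Φ)
      + (1 + X) * (1 - X ^ 3) * Φ = 1 + X + 3 * X ^ 2 :=
  stmt_10_general Φ hΦ
end

section
/- Let (a_l) be defined by a_0 = a_1 = 1 and a_{l+1} = a_l + \sum_{j=0}^{l-2} a_j a_{l-1-j}. Then for all l \geq 4, (l+2)a_l - (2l+1)a_{l-1} - (l-1)a_{l-2} - (2l-5)a_{l-3} + (l-4)a_{l-4} = 0. -/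
/-!
The generating function `f = ∑ aₗ Xˡ` satisfies the quadratic equation
`X² f² - (1 - X + X²) f + 1 = 0`, so `(2X² f - (1 - X + X²))² = Δ` with
`Δ = 1 - 2X - X² - 2X³ + X⁴`. Differentiating this and eliminating `f²` gives the first-order
linear differential equation `Δ · X f' = (X³ + X² + 3X - 2) f + 2 - 2X²`, whose coefficient of
`X^(m+4)` is the claimed recurrence.
-/

open PowerSeries

namespace PowerSeries

variable {R : Type*} [CommRing R]

theorem coeff_X_mul_derivative (f : R⟦X⟧) (n : ℕ) :
    coeff n (X * d⁄dX R f) = n * coeff n f := by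
  rcases n with _ | n
  · simp
  · rw [coeff_succ_X_mul, coeff_derivative]
    push_cast
    ring

theorem mk_eq_one_add_X_mul_add_X_sq_mul {a : ℕ → R} (h0 : a 0 = 1) (h1 : a 1 = 1)
    (hrec : ∀ l ≥ 1, a (l + 1) = a l + ∑ j ∈ Finset.range (l - 1), a j * a (l - 1 - j)) :
    mk a = 1 + X * mk a + X ^ 2 * (mk a ^ 2 - mk a) := by
  ext n
  rcases n with _ | _ | n
  · simp [h0]
  · simp [h0, h1, coeff_X_pow_mul']
  · have hsq : coeff n (mk a ^ 2) = ∑ j ∈ Finset.range n, a j * a (n - j) + a n := by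
      rw [sq, coeff_mul, Finset.Nat.sum_antidiagonal_eq_sum_range_succ_mk, Finset.sum_range_succ]
      simp [h0]
    rw [map_add, map_add, coeff_succ_X_mul, coeff_mk, hrec (n + 1) (by omega),
      show n + 1 + 1 = n + 2 from rfl, coeff_X_pow_mul, map_sub, hsq]
    simp

theorem X_mul_derivative_eq_of_quadratic {f : R⟦X⟧}
    (hf : f = 1 + X * f + X ^ 2 * (f ^ 2 - f)) :
    (1 - 2 * X - X ^ 2 - 2 * X ^ 3 + X ^ 4) * (X * d⁄dX R f)
      = (X ^ 3 + X ^ 2 + 3 * X - 2) * f + 2 - 2 * X ^ 2 := by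
  have hd := congrArg (d⁄dX R) hf
  simp only [map_add, map_sub, Derivation.leibniz, Derivation.leibniz_pow, derivative_X,
    Derivation.map_one_eq_zero, smul_eq_mul, nsmul_eq_mul] at hd
  -- the derivative of `(2X² f - (1 - X + X²))² = Δ`, multiplied by `2X² f - (1 - X + X²)`
  linear_combination -(X * (2 * (X : R⟦X⟧) ^ 2 * f - 1 + X - X ^ 2)) * hd
    + (2 * (2 * (X : R⟦X⟧) ^ 2 * f - 1 + X - X ^ 2) + 4 * X ^ 3 * d⁄dX R f - 2 * X + 4) * hf

theorem coeff_recurrence_of_X_mul_derivative_eq {f : R⟦X⟧}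
    (hf : (1 - 2 * X - X ^ 2 - 2 * X ^ 3 + X ^ 4) * (X * d⁄dX R f)
      = (X ^ 3 + X ^ 2 + 3 * X - 2) * f + 2 - 2 * X ^ 2) (m : ℕ) :
    ((m : R) + 6) * coeff (m + 4) f - (2 * m + 9) * coeff (m + 3) f - (m + 3) * coeff (m + 2) f
      - (2 * m + 3) * coeff (m + 1) f + m * coeff m f = 0 := by
  have h := congrArg (coeff (m + 4)) hf
  generalize hg : X * d⁄dX R f = g at h
  simp only [← map_ofNat C, sub_mul, add_mul, one_mul, mul_assoc, map_add, map_sub, coeff_C_mul,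
    coeff_X_pow_mul', coeff_succ_X_mul, coeff_C, coeff_X_pow] at h
  subst hg
  simp only [coeff_X_mul_derivative, show m + 4 - 2 = m + 2 by omega,
    show m + 4 - 3 = m + 1 by omega, show m + 4 - 4 = m by omega, show m + 4 ≠ 2 by omega,
    show 2 ≤ m + 4 by omega, show 3 ≤ m + 4 by omega, show 4 ≤ m + 4 by omega,
    if_true, if_false] at h
  push_cast at h
  linear_combination h

end PowerSeries

theorem stmt_13 (a : ℕ → ℚ) (h0 : a 0 = 1) (h1 : a 1 = 1)
    (hrec : ∀ l ≥ 1, a (l + 1) = a l + ∑ j ∈ Finset.range (l - 1), a j * a (l - 1 - j)) :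
    ∀ l : ℕ, 4 ≤ l →
      ((l : ℚ) + 2) * a l - (2 * (l : ℚ) + 1) * a (l - 1) - ((l : ℚ) - 1) * a (l - 2)
        - (2 * (l : ℚ) - 5) * a (l - 3) + ((l : ℚ) - 4) * a (l - 4) = 0 := by
  intro l hl
  obtain ⟨m, rfl⟩ : ∃ m, l = m + 4 := ⟨l - 4, by omega⟩
  have h := coeff_recurrence_of_X_mul_derivative_eq
    (X_mul_derivative_eq_of_quadratic (mk_eq_one_add_X_mul_add_X_sq_mul h0 h1 hrec)) m
  simp only [coeff_mk] at h
  rw [show m + 4 - 1 = m + 3 by omega, show m + 4 - 2 = m + 2 by omega,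
    show m + 4 - 3 = m + 1 by omega, show m + 4 - 4 = m by omega]
  push_cast
  linear_combination h
end
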